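/- Let n ≥ 1 and let a : Fin n → ℕ satisfy a j ≤ 9 for all j, and set x = Σ_{j=0}^{n-1} a_j · 10^j. Extend a by a_{-1} = 0 and a_n = 0, and for 0 ≤ j ≤ n define the natural numbers c_j = ⌊a_{j-1}/2⌋ + 5·(a_j mod 2). Then 5·x = Σ_{j=0}^{n} c_j · 10^j. -/

import Mathlib

/-!
Halving digit by digit: an even base `2m` makes `m · d = ⌊d/2⌋ · 2m + m · (d mod 2)` for every
digit `d`, so `m · aⱼ` splits into `⌊aⱼ/2⌋` carried one place up and `m · (aⱼ mod 2)` kept in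
place. Summing over the digits, the carried halves and the kept parts regroup into the digits
`cⱼ = ⌊aⱼ₋₁/2⌋ + m · (aⱼ mod 2)` of `m · x`; the top digit `aₙ = 0` leaves no remainder.
-/

open Finset

theorem mul_eq_div_two_mul_add_mul_mod_two (m d : ℕ) :
    m * d = d / 2 * (2 * m) + m * (d % 2) := by
  conv_lhs => rw [← Nat.div_add_mod d 2]
  ring

/-- The partial sums carry the term `m · (aₙ mod 2) · (2m)ⁿ` that the next digit absorbs. -/
theorem sum_range_succ_halved_digits (m : ℕ) (A : ℤ → ℕ) (hA : A (-1) = 0) (n : ℕ) :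
    ∑ j ∈ range (n + 1), (A ((j : ℤ) - 1) / 2 + m * (A j % 2)) * (2 * m) ^ j
      = m * ∑ k ∈ range n, A k * (2 * m) ^ k + m * (A n % 2) * (2 * m) ^ n := by
  induction n with
  | zero => simp [hA]
  | succ n ih =>
    have hcarry := mul_eq_div_two_mul_add_mul_mod_two m (A n)
    rw [sum_range_succ, ih, sum_range_succ, mul_add]
    push_cast
    rw [add_sub_cancel_right]
    linear_combination (2 * m) ^ n * hcarry.symm

theorem mz_algorithm_integer_general (n : ℕ) (a : Fin n → ℕ)
    (x : ℕ)
    (hx : x = ∑ j : Fin n, a j * 10 ^ (j : ℕ))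
    (A : ℤ → ℕ) (hA : ∀ j : Fin n, A (j : ℕ) = a j)
    (hAneg : A (-1) = 0) (hAn : A (n : ℕ) = 0)
    (c : ℕ → ℕ)
    (hc : ∀ j : ℕ, j ≤ n → c j = A ((j : ℤ) - 1) / 2 + 5 * (A (j : ℕ) % 2)) :
    5 * x = ∑ j ∈ Finset.range (n + 1), c j * 10 ^ j := by
  have hxA : x = ∑ k ∈ range n, A k * (2 * 5) ^ k := by
    rw [hx, ← Fin.sum_univ_eq_sum_range (fun k => A k * (2 * 5) ^ k)]
    simp [hA]
  calc 5 * x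
      = ∑ j ∈ range (n + 1), (A ((j : ℤ) - 1) / 2 + 5 * (A j % 2)) * (2 * 5) ^ j := by
        rw [sum_range_succ_halved_digits 5 A hAneg, hAn, hxA]
        simp
    _ = ∑ j ∈ range (n + 1), c j * 10 ^ j := by
        refine sum_congr rfl fun j hj => ?_
        rw [hc j (Nat.lt_succ_iff.mp (mem_range.mp hj))]

/-- Integer reformulation of the MZ-algorithm: if `a : Fin n → ℕ` are the
decimal digits of `x`, extended by `a_{-1} = 0` and `a_n = 0` (via `A : ℤ → ℕ`),
and `c_j = ⌊a_{j-1}/2⌋ + 5·(a_j mod 2)` for `0 ≤ j ≤ n`, then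
`5·x = Σ_{j=0}^{n} c_j · 10^j`. -/
theorem mz_algorithm_integer (n : ℕ) (hn : 1 ≤ n) (a : Fin n → ℕ)
    (ha : ∀ j, a j ≤ 9) (x : ℕ)
    (hx : x = ∑ j : Fin n, a j * 10 ^ (j : ℕ))
    (A : ℤ → ℕ) (hA : ∀ j : Fin n, A (j : ℕ) = a j)
    (hAneg : A (-1) = 0) (hAn : A (n : ℕ) = 0)
    (c : ℕ → ℕ)
    (hc : ∀ j : ℕ, j ≤ n → c j = A ((j : ℤ) - 1) / 2 + 5 * (A (j : ℕ) % 2)) :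
    5 * x = ∑ j ∈ Finset.range (n + 1), c j * 10 ^ j :=
  mz_algorithm_integer_general n a x hx A hA hAneg hAn c hc
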